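/- arXiv:2406.07552 — 2 statements merged into one kernel-verified Lean document; each statement's English description precedes it below -/
import Mathlib

section
/- Let θ : ĝ → g be a central extension of restricted Lie algebras over F with kernel h (so [h,ĝ] = 0 and u^[2]_ĝ = 0 for all u ∈ h), let D_g be a restricted derivation of (g,[2]_g), let D_h : h → h be F-linear, and let s be a section of θ. Define ψ(x,y) = [s(x),s(y)] + s([x,y]), ς(x) = s(x)^[2]_ĝ + s(x^[2]_g), Ob_I(x,y) = D_h(ψ(x,y)) + ψ(D_g(x),y) + ψ(x,D_g(y)), and Ob_II(x) = D_h(ς(x)) + ψ(x,D_g(x)). Then the pair (D_h, D_g) is extensible — i.e. there exists a restricted derivation D_ĝ of (ĝ,[2]_ĝ) with D_ĝ(u) = D_h(u) for all u ∈ h and θ∘D_ĝ = D_g∘θ — if and only if the obstruction class is trivial, i.e. there exists an F-linear map γ : g → h with Ob_I(x,y) = γ([x,y]) and Ob_II(x) = γ(x^[2]_g) for all x,y ∈ g. -/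
/-!
Writing every element of `ĝ` as `s x + a` with `a` in the central, square-free kernel,
brackets and squares in `ĝ` depend only on the images in `g`. Hence a lift `D` of `D_g`
agreeing with `D_h` on the kernel is determined by `γ := s ∘ D_g - D ∘ s : g → h`, and
comparing `D ⁅s x, s y⁆ = D (ψ x y) + D (s ⁅x, y⁆)` with `⁅D (s x), s y⁆ + ⁅s x, D (s y)⁆`
(and likewise for squares) shows that `D` is a restricted derivation exactly when `γ`
trivializes the obstruction. Conversely `D := (s ∘ D_g - γ) ∘ θ + D_h ∘ (id - s ∘ θ)` is such
a lift for any `γ`. This works over any commutative ring; in characteristic 2 the signs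
disappear.
-/

theorem neg_eq_self_of_charTwo (F : Type*) {M : Type*} [Ring F] [CharP F 2] [AddCommGroup M]
    [Module F M] (m : M) : -m = m := by
  rw [← neg_one_smul F m, CharTwo.neg_eq, one_smul]

theorem sub_eq_add_of_charTwo (F : Type*) {M : Type*} [Ring F] [CharP F 2] [AddCommGroup M]
    [Module F M] (m n : M) : m - n = m + n := by
  rw [sub_eq_add_neg, neg_eq_self_of_charTwo F n]

section CentralExtension

variable {R L E : Type*} [CommRing R] [LieRing L] [LieAlgebra R L] [LieRing E] [LieAlgebra R E]
  {θ : E →ₗ⁅R⁆ L}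

theorem lie_eq_lie_of_ker_central (hcentral : ∀ u : E, θ u = 0 → ∀ v : E, ⁅u, v⁆ = 0)
    {u u' v v' : E} (hu : θ u = θ u') (hv : θ v = θ v') : ⁅u, v⁆ = ⁅u', v'⁆ := by
  have ku : θ (u - u') = 0 := by rw [map_sub θ, hu, sub_self]
  have kv : θ (v - v') = 0 := by rw [map_sub θ, hv, sub_self]
  have hv' : ⁅u', v - v'⁆ = 0 := by rw [← lie_skew, hcentral _ kv, neg_zero]
  calc ⁅u, v⁆ = ⁅u', v⁆ + ⁅u - u', v⁆ := by rw [sub_lie, add_sub_cancel]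
    _ = ⁅u', v'⁆ + ⁅u', v - v'⁆ := by rw [hcentral _ ku, add_zero, lie_sub, add_sub_cancel]
    _ = ⁅u', v'⁆ := by rw [hv', add_zero]

theorem sq_eq_sq_of_ker_central (sqE : E → E)
    (hsq_add : ∀ u v : E, sqE (u + v) = sqE u + sqE v + ⁅u, v⁆)
    (hcentral : ∀ u : E, θ u = 0 → ∀ v : E, ⁅u, v⁆ = 0)
    (hker_sq : ∀ u : E, θ u = 0 → sqE u = 0) {u u' : E} (h : θ u = θ u') :
    sqE u = sqE u' := by
  have k : θ (u - u') = 0 := by rw [map_sub θ, h, sub_self]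
  have hlie : ⁅u', u - u'⁆ = 0 := by
    rw [lie_eq_lie_of_ker_central hcentral rfl (k.trans (map_zero θ).symm), lie_zero]
  calc sqE u = sqE (u' + (u - u')) := by rw [add_sub_cancel]
    _ = sqE u' := by rw [hsq_add, hker_sq _ k, hlie, add_zero, add_zero]

/-- The paper's `ψ`, written so that it makes sense in any characteristic. -/
def bracketDefect (s : L →ₗ[R] E) (x y : L) : E := ⁅s x, s y⁆ - s ⁅x, y⁆

/-- The paper's `ς`, written so that it makes sense in any characteristic. -/
def squareDefect (sqE : E → E) (sqL : L → L) (s : L →ₗ[R] E) (x : L) : E :=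
  sqE (s x) - s (sqL x)

theorem map_bracketDefect {s : L →ₗ[R] E} (hs : ∀ x, θ (s x) = x) (x y : L) :
    θ (bracketDefect s x y) = 0 := by
  rw [bracketDefect, map_sub θ, LieHom.map_lie, hs, hs, hs, sub_self]

theorem map_squareDefect {sqE : E → E} {sqL : L → L} {s : L →ₗ[R] E}
    (hθsq : ∀ u, θ (sqE u) = sqL (θ u)) (hs : ∀ x, θ (s x) = x) (x : L) :
    θ (squareDefect sqE sqL s x) = 0 := by
  rw [squareDefect, map_sub θ, hθsq, hs, hs, sub_self]

theorem lie_eq_bracketDefect_add (hcentral : ∀ u : E, θ u = 0 → ∀ v : E, ⁅u, v⁆ = 0)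
    {s : L →ₗ[R] E} (hs : ∀ x, θ (s x) = x) {u v : E} {x y : L} (hu : θ u = x) (hv : θ v = y) :
    ⁅u, v⁆ = bracketDefect s x y + s ⁅x, y⁆ := by
  rw [bracketDefect, sub_add_cancel]
  exact lie_eq_lie_of_ker_central hcentral (hu.trans (hs x).symm) (hv.trans (hs y).symm)

variable {sqE : E → E} {sqL : L → L} {s : L →ₗ[R] E} {Dg : L →ₗ[R] L} {Dh D : E →ₗ[R] E}
  {γ : L →ₗ[R] E}

theorem apply_lie_sub_eq (hcentral : ∀ u : E, θ u = 0 → ∀ v : E, ⁅u, v⁆ = 0)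
    (hs : ∀ x, θ (s x) = x) (hDg_br : ∀ x y : L, Dg ⁅x, y⁆ = ⁅Dg x, y⁆ + ⁅x, Dg y⁆)
    (hθD : ∀ u, θ (D u) = Dg (θ u)) (hD_ker : ∀ u, θ u = 0 → D u = Dh u)
    (hDs : ∀ x, D (s x) = s (Dg x) - γ x) (u v : E) :
    D ⁅u, v⁆ - (⁅D u, v⁆ + ⁅u, D v⁆) =
      Dh (bracketDefect s (θ u) (θ v)) - bracketDefect s (Dg (θ u)) (θ v)
        - bracketDefect s (θ u) (Dg (θ v)) - γ ⁅θ u, θ v⁆ := by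
  rw [lie_eq_bracketDefect_add hcentral hs rfl rfl, lie_eq_bracketDefect_add hcentral hs (hθD u) rfl,
    lie_eq_bracketDefect_add hcentral hs rfl (hθD v), map_add, hD_ker _ (map_bracketDefect hs _ _),
    hDs, hDg_br, map_add]
  abel

theorem apply_sq_sub_eq (hsq_add : ∀ u v : E, sqE (u + v) = sqE u + sqE v + ⁅u, v⁆)
    (hθsq : ∀ u, θ (sqE u) = sqL (θ u)) (hcentral : ∀ u : E, θ u = 0 → ∀ v : E, ⁅u, v⁆ = 0)
    (hker_sq : ∀ u : E, θ u = 0 → sqE u = 0) (hs : ∀ x, θ (s x) = x)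
    (hDg_sq : ∀ x : L, Dg (sqL x) = ⁅x, Dg x⁆)
    (hθD : ∀ u, θ (D u) = Dg (θ u)) (hD_ker : ∀ u, θ u = 0 → D u = Dh u)
    (hDs : ∀ x, D (s x) = s (Dg x) - γ x) (u : E) :
    D (sqE u) - ⁅u, D u⁆ =
      Dh (squareDefect sqE sqL s (θ u)) - bracketDefect s (θ u) (Dg (θ u)) - γ (sqL (θ u)) := by
  have hsq : sqE u = squareDefect sqE sqL s (θ u) + s (sqL (θ u)) := by
    rw [squareDefect, sub_add_cancel]
    exact sq_eq_sq_of_ker_central sqE hsq_add hcentral hker_sq (hs _).symm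
  rw [hsq, lie_eq_bracketDefect_add hcentral hs rfl (hθD u), map_add,
    hD_ker _ (map_squareDefect hθsq hs _), hDs, hDg_sq]
  abel

theorem forall_map_lie_iff (hcentral : ∀ u : E, θ u = 0 → ∀ v : E, ⁅u, v⁆ = 0)
    (hs : ∀ x, θ (s x) = x) (hDg_br : ∀ x y : L, Dg ⁅x, y⁆ = ⁅Dg x, y⁆ + ⁅x, Dg y⁆)
    (hθD : ∀ u, θ (D u) = Dg (θ u)) (hD_ker : ∀ u, θ u = 0 → D u = Dh u)
    (hDs : ∀ x, D (s x) = s (Dg x) - γ x) :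
    (∀ u v : E, D ⁅u, v⁆ = ⁅D u, v⁆ + ⁅u, D v⁆) ↔
      ∀ x y : L, Dh (bracketDefect s x y) - bracketDefect s (Dg x) y
        - bracketDefect s x (Dg y) = γ ⁅x, y⁆ := by
  have key := apply_lie_sub_eq hcentral hs hDg_br hθD hD_ker hDs
  refine ⟨fun h x y => ?_, fun h u v => ?_⟩
  · have := key (s x) (s y)
    rwa [h, sub_self, hs, hs, eq_comm, sub_eq_zero] at this
  · rw [← sub_eq_zero, key, sub_eq_zero, h]

theorem forall_map_sq_iff (hsq_add : ∀ u v : E, sqE (u + v) = sqE u + sqE v + ⁅u, v⁆)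
    (hθsq : ∀ u, θ (sqE u) = sqL (θ u)) (hcentral : ∀ u : E, θ u = 0 → ∀ v : E, ⁅u, v⁆ = 0)
    (hker_sq : ∀ u : E, θ u = 0 → sqE u = 0) (hs : ∀ x, θ (s x) = x)
    (hDg_sq : ∀ x : L, Dg (sqL x) = ⁅x, Dg x⁆)
    (hθD : ∀ u, θ (D u) = Dg (θ u)) (hD_ker : ∀ u, θ u = 0 → D u = Dh u)
    (hDs : ∀ x, D (s x) = s (Dg x) - γ x) :
    (∀ u : E, D (sqE u) = ⁅u, D u⁆) ↔
      ∀ x : L, Dh (squareDefect sqE sqL s x) - bracketDefect s x (Dg x) = γ (sqL x) := by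
  have key := apply_sq_sub_eq hsq_add hθsq hcentral hker_sq hs hDg_sq hθD hD_ker hDs
  refine ⟨fun h x => ?_, fun h u => ?_⟩
  · have := key (s x)
    rwa [h, sub_self, hs, eq_comm, sub_eq_zero] at this
  · rw [← sub_eq_zero, key, sub_eq_zero, h]

theorem exists_restricted_derivation_lift_iff
    (hsq_add : ∀ u v : E, sqE (u + v) = sqE u + sqE v + ⁅u, v⁆)
    (hθsq : ∀ u, θ (sqE u) = sqL (θ u)) (hcentral : ∀ u : E, θ u = 0 → ∀ v : E, ⁅u, v⁆ = 0)
    (hker_sq : ∀ u : E, θ u = 0 → sqE u = 0)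
    (hDg_br : ∀ x y : L, Dg ⁅x, y⁆ = ⁅Dg x, y⁆ + ⁅x, Dg y⁆)
    (hDg_sq : ∀ x : L, Dg (sqL x) = ⁅x, Dg x⁆) (hDh_ker : ∀ u, θ u = 0 → θ (Dh u) = 0)
    (hs : ∀ x, θ (s x) = x) :
    (∃ D : E →ₗ[R] E,
        (∀ u v : E, D ⁅u, v⁆ = ⁅D u, v⁆ + ⁅u, D v⁆) ∧ (∀ u : E, D (sqE u) = ⁅u, D u⁆) ∧
        (∀ u, θ u = 0 → D u = Dh u) ∧ (∀ u, θ (D u) = Dg (θ u))) ↔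
      ∃ γ : L →ₗ[R] E, (∀ x, θ (γ x) = 0) ∧
        (∀ x y : L, Dh (bracketDefect s x y) - bracketDefect s (Dg x) y
          - bracketDefect s x (Dg y) = γ ⁅x, y⁆) ∧
        ∀ x : L, Dh (squareDefect sqE sqL s x) - bracketDefect s x (Dg x) = γ (sqL x) := by
  constructor
  · rintro ⟨D, hbr, hsq, hD_ker, hθD⟩
    have hDs : ∀ x, D (s x) = s (Dg x) - (s ∘ₗ Dg - D ∘ₗ s) x := by simp
    refine ⟨s ∘ₗ Dg - D ∘ₗ s, fun x => by simp [hθD, hs], ?_, ?_⟩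
    · exact (forall_map_lie_iff hcentral hs hDg_br hθD hD_ker hDs).1 hbr
    · exact (forall_map_sq_iff hsq_add hθsq hcentral hker_sq hs hDg_sq hθD hD_ker hDs).1 hsq
  · rintro ⟨γ, hγ, hbr, hsq⟩
    let D : E →ₗ[R] E := (s ∘ₗ Dg - γ) ∘ₗ θ + Dh ∘ₗ (LinearMap.id - s ∘ₗ θ)
    have hD : ∀ u, D u = s (Dg (θ u)) - γ (θ u) + Dh (u - s (θ u)) := fun u => rfl
    have hθD : ∀ u, θ (D u) = Dg (θ u) := fun u => by
      rw [hD, map_add θ, map_sub θ, hs, hγ, sub_zero, hDh_ker _ (by rw [map_sub θ, hs, sub_self]),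
        add_zero]
    have hD_ker : ∀ u, θ u = 0 → D u = Dh u := fun u hu => by simp [hD, hu]
    have hDs : ∀ x, D (s x) = s (Dg x) - γ x := fun x => by simp [hD, hs]
    exact ⟨D, (forall_map_lie_iff hcentral hs hDg_br hθD hD_ker hDs).2 hbr,
      (forall_map_sq_iff hsq_add hθsq hcentral hker_sq hs hDg_sq hθD hD_ker hDs).2 hsq,
      hD_ker, hθD⟩

end CentralExtension

theorem stmt17_general
    {F : Type*} [Field F] [CharP F 2]
    {g : Type*} [LieRing g] [LieAlgebra F g]
    {gh : Type*} [LieRing gh] [LieAlgebra F gh]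
    -- restricted structure on g
    (sqg : g → g)
    -- restricted structure on ĝ
    (sqgh : gh → gh)
    (hsqgh_add : ∀ u v : gh, sqgh (u + v) = sqgh u + sqgh v + ⁅u, v⁆)
    -- θ : ĝ → g is a central extension of restricted Lie algebras with kernel h
    (θ : gh →ₗ⁅F⁆ g)
    (hθsq : ∀ u : gh, θ (sqgh u) = sqg (θ u))
    (hcentral : ∀ u : gh, θ u = 0 → ∀ v : gh, ⁅u, v⁆ = 0)
    (hker_sq : ∀ u : gh, θ u = 0 → sqgh u = 0)
    -- a restricted derivation of g
    (Dg : g →ₗ[F] g)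
    (hDg_br : ∀ x y : g, Dg ⁅x, y⁆ = ⁅Dg x, y⁆ + ⁅x, Dg y⁆)
    (hDg_sq : ∀ x : g, Dg (sqg x) = ⁅x, Dg x⁆)
    -- a linear map D_h : h → h on the kernel
    (Dh : gh →ₗ[F] gh)
    (hDh_ker : ∀ u : gh, θ u = 0 → θ (Dh u) = 0)
    -- a section of θ
    (s : g →ₗ[F] gh)
    (hs : ∀ x : g, θ (s x) = x) :
    let ψ : g → g → gh := fun x y => ⁅s x, s y⁆ + s ⁅x, y⁆
    let ς : g → gh := fun x => sqgh (s x) + s (sqg x)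
    let ObI : g → g → gh := fun x y => Dh (ψ x y) + ψ (Dg x) y + ψ x (Dg y)
    let ObII : g → gh := fun x => Dh (ς x) + ψ x (Dg x)
    -- (D_h, D_g) is extensible ...
    ((∃ Dgh : gh →ₗ[F] gh,
        (∀ u v : gh, Dgh ⁅u, v⁆ = ⁅Dgh u, v⁆ + ⁅u, Dgh v⁆) ∧
        (∀ u : gh, Dgh (sqgh u) = ⁅u, Dgh u⁆) ∧
        (∀ u : gh, θ u = 0 → Dgh u = Dh u) ∧
        (∀ u : gh, θ (Dgh u) = Dg (θ u))) ↔
      -- ... iff the obstruction class is trivial: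
      (∃ γ : g →ₗ[F] gh,
        (∀ x : g, θ (γ x) = 0) ∧
        (∀ x y : g, ObI x y = γ ⁅x, y⁆) ∧
        (∀ x : g, ObII x = γ (sqg x)))) := by
  simpa only [bracketDefect, squareDefect, sub_eq_add_of_charTwo F] using
    exists_restricted_derivation_lift_iff hsqgh_add hθsq hcentral hker_sq hDg_br hDg_sq hDh_ker hs

/-- for a central extension `θ : ĝ → g` of restricted Lie algebras with
kernel `h`, the pair `(D_h, D_g)` is extensible if and only if the obstruction class
is trivial. -/
theorem stmt17
    {F : Type*} [Field F] [CharP F 2]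
    {g : Type*} [LieRing g] [LieAlgebra F g]
    {gh : Type*} [LieRing gh] [LieAlgebra F gh]
    -- restricted structure on g
    (sqg : g → g)
    (hsqg_ad : ∀ x y : g, ⁅sqg x, y⁆ = ⁅x, ⁅x, y⁆⁆)
    (hsqg_smul : ∀ (a : F) (x : g), sqg (a • x) = a ^ 2 • sqg x)
    (hsqg_add : ∀ x y : g, sqg (x + y) = sqg x + sqg y + ⁅x, y⁆)
    -- restricted structure on ĝ
    (sqgh : gh → gh)
    (hsqgh_ad : ∀ u v : gh, ⁅sqgh u, v⁆ = ⁅u, ⁅u, v⁆⁆)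
    (hsqgh_smul : ∀ (a : F) (u : gh), sqgh (a • u) = a ^ 2 • sqgh u)
    (hsqgh_add : ∀ u v : gh, sqgh (u + v) = sqgh u + sqgh v + ⁅u, v⁆)
    -- θ : ĝ → g is a central extension of restricted Lie algebras with kernel h
    (θ : gh →ₗ⁅F⁆ g)
    (hθsurj : Function.Surjective θ)
    (hθsq : ∀ u : gh, θ (sqgh u) = sqg (θ u))
    (hcentral : ∀ u : gh, θ u = 0 → ∀ v : gh, ⁅u, v⁆ = 0)
    (hker_sq : ∀ u : gh, θ u = 0 → sqgh u = 0)
    -- a restricted derivation of g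
    (Dg : g →ₗ[F] g)
    (hDg_br : ∀ x y : g, Dg ⁅x, y⁆ = ⁅Dg x, y⁆ + ⁅x, Dg y⁆)
    (hDg_sq : ∀ x : g, Dg (sqg x) = ⁅x, Dg x⁆)
    -- a linear map D_h : h → h on the kernel
    (Dh : gh →ₗ[F] gh)
    (hDh_ker : ∀ u : gh, θ u = 0 → θ (Dh u) = 0)
    -- a section of θ
    (s : g →ₗ[F] gh)
    (hs : ∀ x : g, θ (s x) = x) :
    let ψ : g → g → gh := fun x y => ⁅s x, s y⁆ + s ⁅x, y⁆
    let ς : g → gh := fun x => sqgh (s x) + s (sqg x)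
    let ObI : g → g → gh := fun x y => Dh (ψ x y) + ψ (Dg x) y + ψ x (Dg y)
    let ObII : g → gh := fun x => Dh (ς x) + ψ x (Dg x)
    -- (D_h, D_g) is extensible ...
    ((∃ Dgh : gh →ₗ[F] gh,
        (∀ u v : gh, Dgh ⁅u, v⁆ = ⁅Dgh u, v⁆ + ⁅u, Dgh v⁆) ∧
        (∀ u : gh, Dgh (sqgh u) = ⁅u, Dgh u⁆) ∧
        (∀ u : gh, θ u = 0 → Dgh u = Dh u) ∧
        (∀ u : gh, θ (Dgh u) = Dg (θ u))) ↔
      -- ... iff the obstruction class is trivial: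
      (∃ γ : g →ₗ[F] gh,
        (∀ x : g, θ (γ x) = 0) ∧
        (∀ x y : g, ObI x y = γ ⁅x, y⁆) ∧
        (∀ x : g, ObII x = γ (sqg x)))) :=
  stmt17_general sqg sqgh hsqgh_add θ hθsq hcentral hker_sq Dg hDg_br hDg_sq Dh hDh_ker s hs
end

section
/- Let θ : ĝ → g be a central extension of restricted Lie algebras over F with kernel h (so [h,ĝ] = 0 and u^[2]_ĝ = 0 for all u ∈ h). Assume that every 2-cocycle of (g,[2]_g) with values in the trivial module h is a 2-coboundary: for every alternating F-bilinear ψ : g×g → h and map ς : g → h with ς(a·x) = a²·ς(x), ς(x+y) = ς(x) + ς(y) + ψ(x,y), ψ(x,[y,z]) + ψ(y,[z,x]) + ψ(z,[x,y]) = 0, and ψ(x^[2]_g,y) + ψ([x,y],x) = 0, there exists an F-linear map λ : g → h with ψ(x,y) = λ([x,y]) and ς(x) = λ(x^[2]_g). Then every pair (D_h, D_g), where D_h : h → h is F-linear and D_g is a restricted derivation of (g,[2]_g), is extensible: there exists a restricted derivation D_ĝ of (ĝ,[2]_ĝ) with D_ĝ(u) = D_h(u) for all u ∈ h and θ∘D_ĝ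 = D_g∘θ. -/
/-!
Lift `D_g` to any linear map `D : ĝ → ĝ` that agrees with `D_h` on `h`; this is possible because
`θ` has a linear section. The failure of `D` to be a restricted derivation is measured by
`(u, v) ↦ D[u,v] - [Du,v] - [u,Dv]` and `u ↦ D(u^[2]) - [u,Du]`. Both take values in `h`, and
since `h` is central and killed by `[2]` they only depend on `θ u, θ v`: they descend to a
restricted 2-cocycle of `g` with values in `h`. If `λ` is a primitive of that cocycle, then
`D - λ ∘ θ` is the required restricted derivation.
-/

theorem add_self_eq_zero_of_charTwo (F : Type*) {V : Type*} [Ring F] [CharP F 2]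
    [AddCommGroup V] [Module F V] (u : V) : u + u = 0 := by
  rw [← two_smul F u, CharTwo.two_eq_zero, zero_smul]

theorem lie_comm_of_charTwo (F : Type*) {L : Type*} [CommRing F] [CharP F 2] [LieRing L]
    [LieAlgebra F L] (u v : L) : ⁅u, v⁆ = ⁅v, u⁆ := by
  rw [← lie_skew, neg_eq_of_add_eq_zero_left (add_self_eq_zero_of_charTwo F _)]

theorem lie_eq_zero_comm {L : Type*} [LieRing L] {x y : L} : ⁅x, y⁆ = 0 ↔ ⁅y, x⁆ = 0 := by
  rw [← lie_skew, neg_eq_zero]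

section Defect

variable {F L : Type*} [CommRing F] [LieRing L] [LieAlgebra F L]

def derivationDefect (D : L →ₗ[F] L) : L →ₗ[F] L →ₗ[F] L :=
  LinearMap.mk₂ F (fun u v => D ⁅u, v⁆ - ⁅D u, v⁆ - ⁅u, D v⁆)
    (fun u u' v => by simp only [add_lie, map_add]; abel)
    (fun a u v => by simp only [smul_lie, map_smul, smul_sub])
    (fun u v v' => by simp only [lie_add, map_add]; abel)
    (fun a u v => by simp only [lie_smul, map_smul, smul_sub])

def sqDefect (sq : L → L) (D : L →ₗ[F] L) (u : L) : L := D (sq u) - ⁅u, D u⁆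

variable {D : L →ₗ[F] L} {sq : L → L}

theorem derivationDefect_apply (u v : L) :
    derivationDefect D u v = D ⁅u, v⁆ - ⁅D u, v⁆ - ⁅u, D v⁆ := rfl

theorem derivationDefect_eq_zero_iff {u v : L} :
    derivationDefect D u v = 0 ↔ D ⁅u, v⁆ = ⁅D u, v⁆ + ⁅u, D v⁆ := by
  rw [derivationDefect_apply, sub_sub, sub_eq_zero]

theorem sqDefect_eq_zero_iff {u : L} : sqDefect sq D u = 0 ↔ D (sq u) = ⁅u, D u⁆ :=
  sub_eq_zero

theorem derivationDefect_self (u : L) : derivationDefect D u u = 0 := by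
  rw [derivationDefect_apply, lie_self, map_zero, ← lie_skew u (D u)]
  abel

theorem derivationDefect_swap (u v : L) : derivationDefect D v u = -derivationDefect D u v := by
  rw [derivationDefect_apply, derivationDefect_apply, ← lie_skew u v, ← lie_skew u (D v),
    ← lie_skew (D u) v, map_neg]
  abel

theorem derivationDefect_cyclic (hcentral : ∀ u v w : L, ⁅derivationDefect D u v, w⁆ = 0)
    (u v w : L) :
    derivationDefect D u ⁅v, w⁆ + derivationDefect D v ⁅w, u⁆ + derivationDefect D w ⁅u, v⁆ =
      0 := by
  have expand : ∀ a b c : L, derivationDefect D a ⁅b, c⁆ =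
      D ⁅a, ⁅b, c⁆⁆ - ⁅D a, ⁅b, c⁆⁆ - ⁅a, ⁅D b, c⁆⁆ - ⁅a, ⁅b, D c⁆⁆ := by
    intro a b c
    have hDbc : D ⁅b, c⁆ = derivationDefect D b c + ⁅D b, c⁆ + ⁅b, D c⁆ := by
      rw [derivationDefect_apply]; abel
    rw [derivationDefect_apply, hDbc, lie_add, lie_add, lie_eq_zero_comm.1 (hcentral _ _ _),
      zero_add]
    abel
  have jacobi := congrArg D (lie_jacobi u v w)
  rw [map_add, map_add, map_zero] at jacobi
  rw [expand, expand, expand]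
  linear_combination (norm := abel) jacobi - lie_jacobi (D u) v w - lie_jacobi (D v) w u
    - lie_jacobi (D w) u v

theorem sqDefect_smul (hsq_smul : ∀ (a : F) (u : L), sq (a • u) = a ^ 2 • sq u)
    (a : F) (u : L) :
    sqDefect sq D (a • u) = a ^ 2 • sqDefect sq D u := by
  simp only [sqDefect, hsq_smul, map_smul, smul_lie, lie_smul, smul_smul, smul_sub, ← pow_two]

theorem derivationDefect_sub {E : L →ₗ[F] L} (hE : ∀ u v : L, ⁅E u, v⁆ = 0) (u v : L) :
    derivationDefect (D - E) u v = derivationDefect D u v - E ⁅u, v⁆ := by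
  simp only [derivationDefect_apply, LinearMap.sub_apply, sub_lie, lie_sub, hE,
    lie_eq_zero_comm.1 (hE _ _)]
  abel

theorem sqDefect_sub {E : L →ₗ[F] L} (hE : ∀ u v : L, ⁅E u, v⁆ = 0) (u : L) :
    sqDefect sq (D - E) u = sqDefect sq D u - E (sq u) := by
  simp only [sqDefect, LinearMap.sub_apply, lie_sub, lie_eq_zero_comm.1 (hE _ _)]
  abel

variable [CharP F 2]

theorem sqDefect_add (hsq_add : ∀ u v : L, sq (u + v) = sq u + sq v + ⁅u, v⁆) (u v : L) :
    sqDefect sq D (u + v) = sqDefect sq D u + sqDefect sq D v + derivationDefect D u v := by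
  simp only [sqDefect, derivationDefect_apply, hsq_add, map_add, lie_add, add_lie]
  rw [lie_comm_of_charTwo F v (D u)]
  abel

theorem derivationDefect_sq_left (hsq_ad : ∀ u v : L, ⁅sq u, v⁆ = ⁅u, ⁅u, v⁆⁆)
    (hcentral : ∀ u v w : L, ⁅derivationDefect D u v, w⁆ = 0)
    (hsq_central : ∀ u w : L, ⁅sqDefect sq D u, w⁆ = 0) (u v : L) :
    derivationDefect D (sq u) v + derivationDefect D ⁅u, v⁆ u = 0 := by
  have hDsq : D (sq u) = sqDefect sq D u + ⁅u, D u⁆ := by rw [sqDefect]; abel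
  have hDuv : D ⁅u, v⁆ = derivationDefect D u v + ⁅D u, v⁆ + ⁅u, D v⁆ := by
    rw [derivationDefect_apply]; abel
  rw [derivationDefect_apply, derivationDefect_apply, hDsq, hDuv, hsq_ad, hsq_ad, add_lie,
    add_lie, add_lie, hsq_central, hcentral, zero_add, zero_add, ← lie_skew ⁅u, v⁆ u,
    ← lie_skew ⁅u, D v⁆ u, map_neg]
  have hswap : ⁅D u, ⁅v, u⁆⁆ = -⁅D u, ⁅u, v⁆⁆ := by rw [← lie_skew u v, lie_neg, neg_neg]
  linear_combination (norm := abel) lie_skew v ⁅u, D u⁆ + lie_skew u ⁅D u, v⁆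
    + lie_skew (D u) ⁅u, v⁆ + lie_jacobi v u (D u) - hswap
    + add_self_eq_zero_of_charTwo F ⁅D u, ⁅u, v⁆⁆

end Defect

structure IsRestrictedCocycle (F : Type*) {M N : Type*} [CommRing F] [LieRing M]
    [LieAlgebra F M] [AddCommGroup N] [Module F N] (sq : M → M) (ψ : M → M → N) (ς : M → N) :
    Prop where
  smul_add_left : ∀ (a : F) (x x' y : M), ψ (a • x + x') y = a • ψ x y + ψ x' y
  smul_add_right : ∀ (a : F) (x y y' : M), ψ x (a • y + y') = a • ψ x y + ψ x y'
  self : ∀ x, ψ x x = 0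
  sq_smul : ∀ (a : F) (x : M), ς (a • x) = a ^ 2 • ς x
  sq_add : ∀ x y, ς (x + y) = ς x + ς y + ψ x y
  cyclic : ∀ x y z, ψ x ⁅y, z⁆ + ψ y ⁅z, x⁆ + ψ z ⁅x, y⁆ = 0
  sq_left : ∀ x y, ψ (sq x) y + ψ ⁅x, y⁆ x = 0

section CentralExtension

variable {F L M : Type*} [CommRing F] [LieRing L] [LieAlgebra F L] [LieRing M] [LieAlgebra F M]
  {θ : L →ₗ⁅F⁆ M} {D : L →ₗ[F] L} {Dg : M →ₗ[F] M}

theorem map_derivationDefect_eq_zero (hD : ∀ u, θ (D u) = Dg (θ u))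
    (hDg : ∀ x y, Dg ⁅x, y⁆ = ⁅Dg x, y⁆ + ⁅x, Dg y⁆) (u v : L) :
    θ (derivationDefect D u v) = 0 := by
  rw [derivationDefect_apply, map_sub, map_sub, hD, LieHom.map_lie, LieHom.map_lie,
    LieHom.map_lie, hD, hD, hDg, sub_sub, sub_self]

theorem map_sqDefect_eq_zero {sqL : L → L} {sqM : M → M} (hθsq : ∀ u, θ (sqL u) = sqM (θ u))
    (hD : ∀ u, θ (D u) = Dg (θ u)) (hDg_sq : ∀ x, Dg (sqM x) = ⁅x, Dg x⁆) (u : L) :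
    θ (sqDefect sqL D u) = 0 := by
  rw [sqDefect, map_sub, hD, hθsq, hDg_sq, LieHom.map_lie, hD, sub_self]

theorem derivationDefect_eq_zero_of_map_eq_zero
    (hcentral : ∀ u, θ u = 0 → ∀ v : L, ⁅u, v⁆ = 0) (hDker : ∀ u, θ u = 0 → θ (D u) = 0)
    {k : L} (hk : θ k = 0) (v : L) :
    derivationDefect D k v = 0 := by
  rw [derivationDefect_apply, hcentral k hk, hcentral _ (hDker k hk), hcentral k hk, map_zero,
    sub_zero, sub_zero]

theorem derivationDefect_congr (hcentral : ∀ u, θ u = 0 → ∀ v : L, ⁅u, v⁆ = 0)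
    (hDker : ∀ u, θ u = 0 → θ (D u) = 0) {u u' v v' : L} (hu : θ u = θ u') (hv : θ v = θ v') :
    derivationDefect D u v = derivationDefect D u' v' := by
  have hker : ∀ {w w' : L}, θ w = θ w' → θ (w - w') = 0 := fun h => by rw [map_sub, h, sub_self]
  calc derivationDefect D u v = derivationDefect D u' v := by
        rw [← sub_eq_zero, ← LinearMap.map_sub₂,
          derivationDefect_eq_zero_of_map_eq_zero hcentral hDker (hker hu)]
    _ = derivationDefect D u' v' := by
        rw [← sub_eq_zero, ← map_sub, derivationDefect_swap,
          derivationDefect_eq_zero_of_map_eq_zero hcentral hDker (hker hv), neg_zero]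

theorem sqDefect_congr [CharP F 2] {sq : L → L}
    (hsq_add : ∀ u v : L, sq (u + v) = sq u + sq v + ⁅u, v⁆) (hker_sq : ∀ u, θ u = 0 → sq u = 0)
    (hcentral : ∀ u, θ u = 0 → ∀ v : L, ⁅u, v⁆ = 0) (hDker : ∀ u, θ u = 0 → θ (D u) = 0)
    {u u' : L} (h : θ u = θ u') : sqDefect sq D u = sqDefect sq D u' := by
  have hk : θ (u - u') = 0 := by rw [map_sub, h, sub_self]
  have hsq_k : sqDefect sq D (u - u') = 0 := by
    rw [sqDefect, hker_sq _ hk, map_zero, hcentral _ hk, sub_zero]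
  conv_lhs => rw [← add_sub_cancel u' u]
  rw [sqDefect_add hsq_add, hsq_k, derivationDefect_swap,
    derivationDefect_eq_zero_of_map_eq_zero hcentral hDker hk, neg_zero, add_zero, add_zero]

theorem isRestrictedCocycle_defect_comp_section [CharP F 2] {sqL : L → L} {sqM : M → M}
    (hsq_ad : ∀ u v : L, ⁅sqL u, v⁆ = ⁅u, ⁅u, v⁆⁆)
    (hsq_smul : ∀ (a : F) (u : L), sqL (a • u) = a ^ 2 • sqL u)
    (hsq_add : ∀ u v : L, sqL (u + v) = sqL u + sqL v + ⁅u, v⁆)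
    (hθsq : ∀ u, θ (sqL u) = sqM (θ u)) (hcentral : ∀ u, θ u = 0 → ∀ v : L, ⁅u, v⁆ = 0)
    (hD : ∀ u, θ (D u) = Dg (θ u)) (hDg_lie : ∀ x y, Dg ⁅x, y⁆ = ⁅Dg x, y⁆ + ⁅x, Dg y⁆)
    (hDg_sq : ∀ x, Dg (sqM x) = ⁅x, Dg x⁆)
    {s : M →ₗ[F] L} (hs : ∀ x, θ (s x) = x) :
    IsRestrictedCocycle F sqM (fun x y => derivationDefect D (s x) (s y))
      (fun x => sqDefect sqL D (s x)) := by
  have hDker : ∀ u, θ u = 0 → θ (D u) = 0 := fun u hu => by rw [hD, hu, map_zero]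
  have hdescend : ∀ u v, derivationDefect D u v = derivationDefect D (s (θ u)) (s (θ v)) :=
    fun u v => derivationDefect_congr hcentral hDker (hs _).symm (hs _).symm
  have hcentral_defect : ∀ u v w : L, ⁅derivationDefect D u v, w⁆ = 0 :=
    fun u v => hcentral _ (map_derivationDefect_eq_zero hD hDg_lie u v)
  refine
    { smul_add_left := fun a x x' y => by
        simp only [map_add, map_smul, LinearMap.add_apply, LinearMap.smul_apply]
      smul_add_right := fun a x y y' => by simp only [map_add, map_smul]
      self := fun x => derivationDefect_self _
      sq_smul := fun a x => by simp only [map_smul]; exact sqDefect_smul hsq_smul a (s x)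
      sq_add := fun x y => by simp only [map_add]; exact sqDefect_add hsq_add _ _
      cyclic := fun x y z => ?_
      sq_left := fun x y => ?_ }
  · have h := derivationDefect_cyclic hcentral_defect (s x) (s y) (s z)
    rw [hdescend (s x), hdescend (s y), hdescend (s z)] at h
    simpa only [LieHom.map_lie, hs] using h
  · have h := derivationDefect_sq_left hsq_ad hcentral_defect
      (fun u => hcentral _ (map_sqDefect_eq_zero hθsq hD hDg_sq u)) (s x) (s y)
    rw [hdescend (sqL (s x)), hdescend ⁅s x, s y⁆] at h
    simpa only [hθsq, LieHom.map_lie, hs] using h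

end CentralExtension

theorem exists_lift_eq_on_ker {F V W : Type*} [Field F] [AddCommGroup V] [Module F V]
    [AddCommGroup W] [Module F W] {f : V →ₗ[F] W} (hf : Function.Surjective f) {Dh : V →ₗ[F] V}
    (hDh : ∀ u, f u = 0 → f (Dh u) = 0) (Dg : W →ₗ[F] W) :
    ∃ D : V →ₗ[F] V, (∀ u, f (D u) = Dg (f u)) ∧ ∀ u, f u = 0 → D u = Dh u := by
  obtain ⟨s, hs⟩ := f.exists_rightInverse_of_surjective (LinearMap.range_eq_top.2 hf)
  have hfs : ∀ w, f (s w) = w := LinearMap.ext_iff.mp hs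
  refine ⟨s ∘ₗ Dg ∘ₗ f + Dh ∘ₗ (LinearMap.id - s ∘ₗ f), fun u => ?_, fun u hu => ?_⟩
  · have hker : f (u - s (f u)) = 0 := by rw [map_sub, hfs, sub_self]
    simp only [LinearMap.add_apply, LinearMap.comp_apply, LinearMap.sub_apply, LinearMap.id_apply,
      map_add, hfs, hDh _ hker, add_zero]
  · simp [hu]

theorem stmt18_general
    {F : Type*} [Field F] [CharP F 2]
    {g : Type*} [LieRing g] [LieAlgebra F g]
    {gh : Type*} [LieRing gh] [LieAlgebra F gh]
    -- restricted structure on g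
    (sqg : g → g)
    -- restricted structure on ĝ
    (sqgh : gh → gh)
    (hsqgh_ad : ∀ u v : gh, ⁅sqgh u, v⁆ = ⁅u, ⁅u, v⁆⁆)
    (hsqgh_smul : ∀ (a : F) (u : gh), sqgh (a • u) = a ^ 2 • sqgh u)
    (hsqgh_add : ∀ u v : gh, sqgh (u + v) = sqgh u + sqgh v + ⁅u, v⁆)
    -- θ : ĝ → g is a central extension of restricted Lie algebras with kernel h
    (θ : gh →ₗ⁅F⁆ g)
    (hθsurj : Function.Surjective θ)
    (hθsq : ∀ u : gh, θ (sqgh u) = sqg (θ u))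
    (hcentral : ∀ u : gh, θ u = 0 → ∀ v : gh, ⁅u, v⁆ = 0)
    (hker_sq : ∀ u : gh, θ u = 0 → sqgh u = 0)
    -- every 2-cocycle of g with values in the trivial module h is a 2-coboundary:
    (H2 : ∀ (ψ : g → g → gh) (ς : g → gh),
      (∀ x y : g, θ (ψ x y) = 0) →
      (∀ x : g, θ (ς x) = 0) →
      (∀ (a : F) (x x' y : g), ψ (a • x + x') y = a • ψ x y + ψ x' y) →
      (∀ (a : F) (x y y' : g), ψ x (a • y + y') = a • ψ x y + ψ x y') →
      (∀ x : g, ψ x x = 0) →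
      (∀ (a : F) (x : g), ς (a • x) = a ^ 2 • ς x) →
      (∀ x y : g, ς (x + y) = ς x + ς y + ψ x y) →
      (∀ x y z : g, ψ x ⁅y, z⁆ + ψ y ⁅z, x⁆ + ψ z ⁅x, y⁆ = 0) →
      (∀ x y : g, ψ (sqg x) y + ψ ⁅x, y⁆ x = 0) →
      ∃ lam : g →ₗ[F] gh,
        (∀ x : g, θ (lam x) = 0) ∧
        (∀ x y : g, ψ x y = lam ⁅x, y⁆) ∧
        (∀ x : g, ς x = lam (sqg x))) :
    -- then every pair (D_h, D_g) is extensible: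
    ∀ (Dh : gh →ₗ[F] gh), (∀ u : gh, θ u = 0 → θ (Dh u) = 0) →
    ∀ (Dg : g →ₗ[F] g),
      (∀ x y : g, Dg ⁅x, y⁆ = ⁅Dg x, y⁆ + ⁅x, Dg y⁆) →
      (∀ x : g, Dg (sqg x) = ⁅x, Dg x⁆) →
      ∃ Dgh : gh →ₗ[F] gh,
        (∀ u v : gh, Dgh ⁅u, v⁆ = ⁅Dgh u, v⁆ + ⁅u, Dgh v⁆) ∧
        (∀ u : gh, Dgh (sqgh u) = ⁅u, Dgh u⁆) ∧
        (∀ u : gh, θ u = 0 → Dgh u = Dh u) ∧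
        (∀ u : gh, θ (Dgh u) = Dg (θ u)) := by
  intro Dh hDh Dg hDg_lie hDg_sq
  obtain ⟨D, hDθ, hD_ker⟩ : ∃ D : gh →ₗ[F] gh,
      (∀ u, θ (D u) = Dg (θ u)) ∧ ∀ u, θ u = 0 → D u = Dh u :=
    exists_lift_eq_on_ker (f := θ.toLinearMap) hθsurj hDh Dg
  have hDker : ∀ u, θ u = 0 → θ (D u) = 0 := fun u hu => by rw [hDθ, hu, map_zero]
  obtain ⟨s, hs⟩ :=
    θ.toLinearMap.exists_rightInverse_of_surjective (LinearMap.range_eq_top.2 hθsurj)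
  have hθs : ∀ x, θ (s x) = x := LinearMap.ext_iff.mp hs
  have hc := isRestrictedCocycle_defect_comp_section hsqgh_ad hsqgh_smul hsqgh_add hθsq hcentral
    hDθ hDg_lie hDg_sq hθs
  obtain ⟨lam, hlam_ker, hlam_ψ, hlam_ς⟩ := H2 _ _
    (fun x y => map_derivationDefect_eq_zero hDθ hDg_lie _ _)
    (fun x => map_sqDefect_eq_zero hθsq hDθ hDg_sq _) hc.smul_add_left hc.smul_add_right hc.self
    hc.sq_smul hc.sq_add hc.cyclic hc.sq_left
  have hlam_central : ∀ u (v : gh), ⁅(lam ∘ₗ θ.toLinearMap) u, v⁆ = 0 :=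
    fun u => hcentral _ (hlam_ker _)
  refine ⟨D - lam ∘ₗ θ.toLinearMap, fun u v => derivationDefect_eq_zero_iff.1 ?_,
    fun u => sqDefect_eq_zero_iff.1 ?_, fun u hu => by simp [hD_ker u hu, hu],
    fun u => by simp [hDθ, hlam_ker]⟩
  · rw [derivationDefect_sub hlam_central,
      derivationDefect_congr hcentral hDker (hθs (θ u)).symm (hθs (θ v)).symm, hlam_ψ]
    simp
  · rw [sqDefect_sub hlam_central,
      sqDefect_congr hsqgh_add hker_sq hcentral hDker (hθs (θ u)).symm, hlam_ς]
    simp [hθsq]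

/-- if every 2-cocycle of `(g,[2])` with values in the trivial module
`h = ker θ` is a 2-coboundary, then every pair `(D_h, D_g)` of a linear map on the
kernel and a restricted derivation of `g` is extensible to a restricted derivation of
`ĝ`. -/
theorem stmt18
    {F : Type*} [Field F] [CharP F 2]
    {g : Type*} [LieRing g] [LieAlgebra F g]
    {gh : Type*} [LieRing gh] [LieAlgebra F gh]
    -- restricted structure on g
    (sqg : g → g)
    (hsqg_ad : ∀ x y : g, ⁅sqg x, y⁆ = ⁅x, ⁅x, y⁆⁆)
    (hsqg_smul : ∀ (a : F) (x : g), sqg (a • x) = a ^ 2 • sqg x)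
    (hsqg_add : ∀ x y : g, sqg (x + y) = sqg x + sqg y + ⁅x, y⁆)
    -- restricted structure on ĝ
    (sqgh : gh → gh)
    (hsqgh_ad : ∀ u v : gh, ⁅sqgh u, v⁆ = ⁅u, ⁅u, v⁆⁆)
    (hsqgh_smul : ∀ (a : F) (u : gh), sqgh (a • u) = a ^ 2 • sqgh u)
    (hsqgh_add : ∀ u v : gh, sqgh (u + v) = sqgh u + sqgh v + ⁅u, v⁆)
    -- θ : ĝ → g is a central extension of restricted Lie algebras with kernel h
    (θ : gh →ₗ⁅F⁆ g)
    (hθsurj : Function.Surjective θ)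
    (hθsq : ∀ u : gh, θ (sqgh u) = sqg (θ u))
    (hcentral : ∀ u : gh, θ u = 0 → ∀ v : gh, ⁅u, v⁆ = 0)
    (hker_sq : ∀ u : gh, θ u = 0 → sqgh u = 0)
    -- every 2-cocycle of g with values in the trivial module h is a 2-coboundary:
    (H2 : ∀ (ψ : g → g → gh) (ς : g → gh),
      (∀ x y : g, θ (ψ x y) = 0) →
      (∀ x : g, θ (ς x) = 0) →
      (∀ (a : F) (x x' y : g), ψ (a • x + x') y = a • ψ x y + ψ x' y) →
      (∀ (a : F) (x y y' : g), ψ x (a • y + y') = a • ψ x y + ψ x y') →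
      (∀ x : g, ψ x x = 0) →
      (∀ (a : F) (x : g), ς (a • x) = a ^ 2 • ς x) →
      (∀ x y : g, ς (x + y) = ς x + ς y + ψ x y) →
      (∀ x y z : g, ψ x ⁅y, z⁆ + ψ y ⁅z, x⁆ + ψ z ⁅x, y⁆ = 0) →
      (∀ x y : g, ψ (sqg x) y + ψ ⁅x, y⁆ x = 0) →
      ∃ lam : g →ₗ[F] gh,
        (∀ x : g, θ (lam x) = 0) ∧
        (∀ x y : g, ψ x y = lam ⁅x, y⁆) ∧
        (∀ x : g, ς x = lam (sqg x))) :
    -- then every pair (D_h, D_g) is extensible: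
    ∀ (Dh : gh →ₗ[F] gh), (∀ u : gh, θ u = 0 → θ (Dh u) = 0) →
    ∀ (Dg : g →ₗ[F] g),
      (∀ x y : g, Dg ⁅x, y⁆ = ⁅Dg x, y⁆ + ⁅x, Dg y⁆) →
      (∀ x : g, Dg (sqg x) = ⁅x, Dg x⁆) →
      ∃ Dgh : gh →ₗ[F] gh,
        (∀ u v : gh, Dgh ⁅u, v⁆ = ⁅Dgh u, v⁆ + ⁅u, Dgh v⁆) ∧
        (∀ u : gh, Dgh (sqgh u) = ⁅u, Dgh u⁆) ∧
        (∀ u : gh, θ u = 0 → Dgh u = Dh u) ∧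
        (∀ u : gh, θ (Dgh u) = Dg (θ u)) :=
  stmt18_general sqg sqgh hsqgh_ad hsqgh_smul hsqgh_add θ hθsurj hθsq hcentral hker_sq H2
end
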